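/- arXiv:2202.02815 — 3 statements merged into one kernel-verified Lean document; each statement's English description precedes it below -/
import Mathlib

section
/- Let s ∈ ℝ^m and w, w' ∈ ℝ^m be vectors all of whose entries are strictly positive, and let k-iterate point w' play the role of w^(k). Then -log(sᵀw) ≤ -∑_{j=1}^m (s_j w'_j / (sᵀw')) · log((sᵀw' / w'_j) · w_j). -/
open Finset

theorem Real.sum_mul_log_le_log_sum_mul {ι : Type*} {t : Finset ι} {θ p : ι → ℝ}
    (hθ : ∀ i ∈ t, 0 ≤ θ i) (hθ₁ : ∑ i ∈ t, θ i = 1) (hp : ∀ i ∈ t, 0 < p i) :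
    ∑ i ∈ t, θ i * Real.log (p i) ≤ Real.log (∑ i ∈ t, θ i * p i) :=
  strictConcaveOn_log_Ioi.concaveOn.le_map_sum hθ hθ₁ hp

/-- Lemma 1: majorization of `-log(sᵀw)` at `w'` via Jensen's inequality. -/
theorem neg_log_inner_le_surrogate {m : ℕ} (s w w' : Fin m → ℝ)
    (hs : ∀ j, 0 < s j) (hw : ∀ j, 0 < w j) (hw' : ∀ j, 0 < w' j) :
    -Real.log (∑ j, s j * w j) ≤
      -∑ j, (s j * w' j / ∑ i, s i * w' i) *
        Real.log ((∑ i, s i * w' i) / w' j * w j) := by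
  rcases isEmpty_or_nonempty (Fin m) with _ | _
  · simp
  set T := ∑ i, s i * w' i
  have hT : 0 < T := sum_pos (fun i _ ↦ mul_pos (hs i) (hw' i)) univ_nonempty
  -- Jensen with weights `s j * w' j / T` at the points `T / w' j * w j`, whose mean is `sᵀw`.
  have hθ₁ : ∑ j, s j * w' j / T = 1 := by rw [← sum_div, div_self hT.ne']
  have hmean : ∑ j, s j * w' j / T * (T / w' j * w j) = ∑ j, s j * w j := by
    refine sum_congr rfl fun j _ ↦ ?_
    field_simp [(hw' j).ne', hT.ne']
  rw [neg_le_neg_iff, ← hmean]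
  exact Real.sum_mul_log_le_log_sum_mul
    (fun j _ ↦ (div_pos (mul_pos (hs j) (hw' j)) hT).le) hθ₁
    (fun j _ ↦ mul_pos (div_pos hT (hw' j)) (hw j))
end

section
/- Let d ∈ ℝ^m have nonnegative entries, let α > 0 and β > 0, and let s_1, …, s_p ∈ ℝ^m be vectors with strictly positive entries. Define f(w) = 2wᵀd - α∑_{i=1}^p log(s_iᵀw) + β‖w‖₂² and, for a point w' with strictly positive entries, define g(w | w') = 2wᵀd - α∑_{i=1}^p ∑_{j=1}^m (s_{i,j} w'_j / (s_iᵀw')) · log((s_iᵀw' / w'_j) · w_j) + β‖w‖₂². Then for every w ∈ ℝ^m with strictly positive entries, f(w) ≤ g(w | w'). -/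
/-! Each logarithm in the objective is bounded below by Jensen's inequality for the concave
function `log`: writing `sᵀw = ∑ⱼ θⱼ xⱼ` with the convex weights `θⱼ = sⱼ w'ⱼ / sᵀw'` and the
points `xⱼ = (sᵀw' / w'ⱼ) wⱼ` gives `log (sᵀw) ≥ ∑ⱼ θⱼ log xⱼ`. Summing over `i` with the factor
`-α ≤ 0` flips this into `f ≤ g`; the linear and quadratic terms are common to both sides. -/

open Finset Real

theorem sum_mul_log_le_log_sum_mul {ι : Type*} (t : Finset ι) (c w w' : ι → ℝ)
    (hc : ∀ j ∈ t, 0 ≤ c j) (hw : ∀ j ∈ t, 0 < w j) (hw' : ∀ j ∈ t, 0 < w' j) :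
    ∑ j ∈ t, (c j * w' j / ∑ l ∈ t, c l * w' l) * log ((∑ l ∈ t, c l * w' l) / w' j * w j)
      ≤ log (∑ j ∈ t, c j * w j) := by
  set S := ∑ l ∈ t, c l * w' l
  have hS : 0 ≤ S := sum_nonneg fun l hl => mul_nonneg (hc l hl) (hw' l hl).le
  rcases hS.eq_or_lt with hS0 | hSpos
  · -- `S = 0` forces `c = 0` on `t`; both sides are then `0` (note `x / 0 = 0`).
    have hc0 : ∀ j ∈ t, c j = 0 := fun j hj =>
      (mul_eq_zero.mp ((sum_eq_zero_iff_of_nonneg fun l hl =>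
        mul_nonneg (hc l hl) (hw' l hl).le).mp hS0.symm j hj)).resolve_right (hw' j hj).ne'
    have hcw : ∑ j ∈ t, c j * w j = 0 := sum_eq_zero fun j hj => by rw [hc0 j hj, zero_mul]
    simp [← hS0, hcw]
  have hweights_nonneg : ∀ j ∈ t, 0 ≤ c j * w' j / S :=
    fun j hj => div_nonneg (mul_nonneg (hc j hj) (hw' j hj).le) hSpos.le
  have hweights_sum : ∑ j ∈ t, c j * w' j / S = 1 := by
    rw [← sum_div, div_self hSpos.ne']
  have hpoints : ∀ j ∈ t, S / w' j * w j ∈ Set.Ioi (0 : ℝ) :=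
    fun j hj => mul_pos (div_pos hSpos (hw' j hj)) (hw j hj)
  have hmean : ∑ j ∈ t, c j * w' j / S * (S / w' j * w j) = ∑ j ∈ t, c j * w j :=
    sum_congr rfl fun j hj => by field_simp [hSpos.ne', (hw' j hj).ne']
  simpa only [smul_eq_mul, hmean] using
    strictConcaveOn_log_Ioi.concaveOn.le_map_sum hweights_nonneg hweights_sum hpoints

theorem objective_le_surrogate_general {m p : ℕ} (d : Fin m → ℝ)
    (α β : ℝ) (hα : 0 < α)
    (s : Fin p → Fin m → ℝ) (hs : ∀ i j, 0 < s i j)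
    (w w' : Fin m → ℝ) (hw : ∀ j, 0 < w j) (hw' : ∀ j, 0 < w' j) :
    2 * (∑ j, w j * d j) - α * ∑ i, Real.log (∑ j, s i j * w j)
        + β * ∑ j, (w j) ^ 2
      ≤ 2 * (∑ j, w j * d j)
        - α * ∑ i, ∑ j, (s i j * w' j / ∑ l, s i l * w' l) *
            Real.log ((∑ l, s i l * w' l) / w' j * w j)
        + β * ∑ j, (w j) ^ 2 := by
  have hlog : ∑ i, ∑ j, (s i j * w' j / ∑ l, s i l * w' l) *
      Real.log ((∑ l, s i l * w' l) / w' j * w j) ≤ ∑ i, Real.log (∑ j, s i j * w j) :=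
    sum_le_sum fun i _ => sum_mul_log_le_log_sum_mul univ (s i) w w'
      (fun j _ => (hs i j).le) (fun j _ => hw j) (fun j _ => hw' j)
  linarith [mul_le_mul_of_nonneg_left hlog hα.le]

/-- The surrogate `g(· | w')` (eq. (12)) upper-bounds the objective `f` (eq. (6)). -/
theorem objective_le_surrogate {m p : ℕ} (d : Fin m → ℝ) (hd : ∀ j, 0 ≤ d j)
    (α β : ℝ) (hα : 0 < α) (hβ : 0 < β)
    (s : Fin p → Fin m → ℝ) (hs : ∀ i j, 0 < s i j)
    (w w' : Fin m → ℝ) (hw : ∀ j, 0 < w j) (hw' : ∀ j, 0 < w' j) :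
    2 * (∑ j, w j * d j) - α * ∑ i, Real.log (∑ j, s i j * w j)
        + β * ∑ j, (w j) ^ 2
      ≤ 2 * (∑ j, w j * d j)
        - α * ∑ i, ∑ j, (s i j * w' j / ∑ l, s i l * w' l) *
            Real.log ((∑ l, s i l * w' l) / w' j * w j)
        + β * ∑ j, (w j) ^ 2 :=
  objective_le_surrogate_general d α β hα s hs w w' hw hw'
end

section
/- Let d ∈ ℝ^m have nonnegative entries, let α > 0 and β > 0, let s_1, …, s_p ∈ ℝ^m have entries in {0,1} with each column nonzero (for every j there exists i with s_{i,j} = 1), and let w ∈ ℝ^m have strictly positive entries. Define, for each j, c_j = α∑_{i=1}^p s_{i,j} w_j / (s_iᵀw) and the update w⁺_j = (-2d_j + √(4d_j² + 8βc_j)) / (4β). Then every entry of w⁺ is strictly positive and f(w⁺) ≤ f(w), where f(v) = 2vᵀd - α∑_{i=1}^p log(s_iᵀv) + β‖v‖₂². -/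
/-!
The update is the exact coordinatewise minimiser of a separable majorizer of `f` at `w`.
Jensen's inequality for the concave `log`, with weights `s_{i,j} w_j / (s_iᵀw)`, gives
`log (s_iᵀv) - log (s_iᵀw) ≥ ∑_j (s_{i,j} w_j / s_iᵀw) (log v_j - log w_j)`, so `f v - f w` is
at most `∑_j (2 d_j (v_j - w_j) + β (v_j² - w_j²) - c_j (log v_j - log w_j))`, which vanishes at
`v = w`. Each summand is convex in `v_j > 0`, and `w⁺_j` is the positive root of its stationarity
equation `2 β x² + 2 d_j x = c_j`, hence its minimiser.
-/

open Finset Real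

noncomputable section

variable {ι κ : Type*} [Fintype ι] [Fintype κ]

def mmCoeff (α : ℝ) (s : κ → ι → ℝ) (w : ι → ℝ) (j : ι) : ℝ :=
  α * ∑ i, s i j * w j / ∑ l, s i l * w l

def mmUpdate (d β c : ℝ) : ℝ :=
  (-2 * d + √(4 * d ^ 2 + 8 * β * c)) / (4 * β)

def mmObjective (d : ι → ℝ) (α β : ℝ) (s : κ → ι → ℝ) (v : ι → ℝ) : ℝ :=
  2 * ∑ j, v j * d j - α * ∑ i, log (∑ j, s i j * v j) + β * ∑ j, v j ^ 2

lemma mmUpdate_pos {d β c : ℝ} (hβ : 0 < β) (hc : 0 < c) : 0 < mmUpdate d β c := by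
  have hsq : (2 * d) ^ 2 < 4 * d ^ 2 + 8 * β * c := by nlinarith
  have hroot : 2 * d < √(4 * d ^ 2 + 8 * β * c) :=
    lt_of_pow_lt_pow_left₀ 2 (sqrt_nonneg _) (by rwa [sq_sqrt (by positivity)])
  unfold mmUpdate
  apply div_pos <;> linarith

lemma mmUpdate_quadratic {d β c : ℝ} (hβ : 0 < β) (hc : 0 ≤ c) :
    2 * β * mmUpdate d β c ^ 2 + 2 * d * mmUpdate d β c = c := by
  have hr := sq_sqrt (show 0 ≤ 4 * d ^ 2 + 8 * β * c by positivity)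
  unfold mmUpdate
  generalize √(4 * d ^ 2 + 8 * β * c) = r at hr
  field_simp
  linear_combination 2 * hr

/-- The tangent-line bound `log w - log t ≤ w / t - 1` turns the stationarity of `t` into the
minimality of `t` for `x ↦ 2 d x + β x² - c log x`. -/
lemma two_mul_sub_add_sq_sub_le_mul_log_sub {d β c t w : ℝ} (hβ : 0 ≤ β) (hc : 0 ≤ c)
    (ht : 0 < t) (hw : 0 < w) (hquad : 2 * β * t ^ 2 + 2 * d * t = c) :
    2 * d * (t - w) + β * (t ^ 2 - w ^ 2) ≤ c * (log t - log w) := by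
  have hlog : log w - log t ≤ w / t - 1 := by
    simpa [log_div hw.ne' ht.ne'] using log_le_sub_one_of_pos (div_pos hw ht)
  have hc_eq : c * (w / t - 1) = (2 * β * t + 2 * d) * (w - t) := by
    rw [← hquad]; field_simp
  have hbound := mul_le_mul_of_nonneg_left hlog hc
  nlinarith [mul_nonneg hβ (sq_nonneg (w - t))]

lemma mmCoeff_nonneg {α : ℝ} {s : κ → ι → ℝ} {w : ι → ℝ} (hα : 0 ≤ α) (hs : ∀ i j, 0 ≤ s i j)
    (hw : ∀ j, 0 ≤ w j) (j : ι) : 0 ≤ mmCoeff α s w j :=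
  mul_nonneg hα <| sum_nonneg fun i _ => div_nonneg (mul_nonneg (hs i j) (hw j)) <|
    sum_nonneg fun l _ => mul_nonneg (hs i l) (hw l)

lemma mmCoeff_pos {α : ℝ} {s : κ → ι → ℝ} {w : ι → ℝ} {j : ι} (hα : 0 < α)
    (hs : ∀ i j, 0 ≤ s i j) (hw : ∀ j, 0 < w j) (hcol : ∃ i, 0 < s i j) :
    0 < mmCoeff α s w j := by
  obtain ⟨i₀, hi₀⟩ := hcol
  have hentry : 0 < s i₀ j * w j := mul_pos hi₀ (hw j)
  have hrow : s i₀ j * w j ≤ ∑ l, s i₀ l * w l :=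
    single_le_sum (fun l _ => mul_nonneg (hs i₀ l) (hw l).le) (mem_univ j)
  refine mul_pos hα (sum_pos' (fun i _ => ?_)
    ⟨i₀, mem_univ _, div_pos hentry (hentry.trans_le hrow)⟩)
  exact div_nonneg (mul_nonneg (hs i j) (hw j).le)
    (sum_nonneg fun l _ => mul_nonneg (hs i l) (hw l).le)

/-- Jensen's inequality for `log` with the weights `a j * w j / ∑ l, a l * w l`. -/
lemma sum_mul_div_mul_log_sub_le {a t w : ι → ℝ} (ha : ∀ j, 0 ≤ a j) (ht : ∀ j, 0 < t j)
    (hw : ∀ j, 0 < w j) :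
    ∑ j, a j * w j / (∑ l, a l * w l) * (log (t j) - log (w j))
      ≤ log (∑ j, a j * t j) - log (∑ j, a j * w j) := by
  set S := ∑ l, a l * w l
  have haw : ∀ j ∈ univ, 0 ≤ a j * w j := fun j _ => mul_nonneg (ha j) (hw j).le
  rcases (sum_nonneg haw).eq_or_lt with hS | hS
  · have ha0 : ∀ j, a j = 0 := fun j =>
      (mul_eq_zero.1 ((sum_eq_zero_iff_of_nonneg haw).1 hS.symm j (mem_univ j))).resolve_right
        (hw j).ne'
    simp [ha0, show S = 0 from hS.symm]
  set lam : ι → ℝ := fun j => a j * w j / S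
  have hlam0 : ∀ j ∈ univ, 0 ≤ lam j := fun j hj => div_nonneg (haw j hj) hS.le
  have hlam1 : ∑ j, lam j = 1 := by rw [← sum_div, div_self hS.ne']
  have hratio : ∀ j ∈ univ, t j / w j ∈ Set.Ioi 0 := fun j _ => div_pos (ht j) (hw j)
  have hmean : ∑ j, lam j * (t j / w j) = (∑ j, a j * t j) / S := by
    rw [sum_div]
    refine sum_congr rfl fun j _ => ?_
    simp only [lam]
    field_simp [(hw j).ne']
  have hmean_pos := (convex_Ioi (0 : ℝ)).sum_mem hlam0 hlam1 hratio
  simp only [smul_eq_mul, hmean] at hmean_pos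
  have hjensen := strictConcaveOn_log_Ioi.concaveOn.le_map_sum hlam0 hlam1 hratio
  simp only [smul_eq_mul, hmean] at hjensen
  rwa [log_div (div_ne_zero_iff.1 (Set.mem_Ioi.1 hmean_pos).ne').1 hS.ne',
    ← sum_congr rfl fun j _ => by rw [log_div (ht j).ne' (hw j).ne']] at hjensen

lemma sum_mmCoeff_mul (α : ℝ) (s : κ → ι → ℝ) (w g : ι → ℝ) :
    ∑ j, mmCoeff α s w j * g j = α * ∑ i, ∑ j, s i j * w j / (∑ l, s i l * w l) * g j := by
  simp only [mmCoeff, mul_assoc, sum_mul, mul_sum]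
  exact sum_comm

lemma mmObjective_sub_mmObjective (d : ι → ℝ) (α β : ℝ) (s : κ → ι → ℝ) (t w : ι → ℝ) :
    mmObjective d α β s t - mmObjective d α β s w
      = ∑ j, (2 * d j * (t j - w j) + β * (t j ^ 2 - w j ^ 2))
        - α * ∑ i, (log (∑ j, s i j * t j) - log (∑ j, s i j * w j)) := by
  have hlin : ∑ j, 2 * d j * (t j - w j) = 2 * ∑ j, t j * d j - 2 * ∑ j, w j * d j := by
    rw [mul_sum, mul_sum, ← sum_sub_distrib]
    exact sum_congr rfl fun j _ => by ring
  have hsq : ∑ j, β * (t j ^ 2 - w j ^ 2) = β * ∑ j, t j ^ 2 - β * ∑ j, w j ^ 2 := by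
    rw [← mul_sub, ← sum_sub_distrib, mul_sum]
  rw [mmObjective, mmObjective, sum_add_distrib, hlin, hsq, sum_sub_distrib]
  ring

lemma mmObjective_le_of_quadratic {d : ι → ℝ} {α β : ℝ} {s : κ → ι → ℝ} {t w : ι → ℝ}
    (hα : 0 ≤ α) (hβ : 0 ≤ β) (hs : ∀ i j, 0 ≤ s i j) (hw : ∀ j, 0 < w j) (ht : ∀ j, 0 < t j)
    (hquad : ∀ j, 2 * β * t j ^ 2 + 2 * d j * t j = mmCoeff α s w j) :
    mmObjective d α β s t ≤ mmObjective d α β s w := by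
  have hsurrogate : ∑ j, (2 * d j * (t j - w j) + β * (t j ^ 2 - w j ^ 2))
      ≤ ∑ j, mmCoeff α s w j * (log (t j) - log (w j)) :=
    sum_le_sum fun j _ => two_mul_sub_add_sq_sub_le_mul_log_sub hβ
      (mmCoeff_nonneg hα hs (fun j => (hw j).le) j) (ht j) (hw j) (hquad j)
  have hjensen : ∑ j, mmCoeff α s w j * (log (t j) - log (w j))
      ≤ α * ∑ i, (log (∑ j, s i j * t j) - log (∑ j, s i j * w j)) := by
    rw [sum_mmCoeff_mul]
    exact mul_le_mul_of_nonneg_left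
      (sum_le_sum fun i _ => sum_mul_div_mul_log_sub_le (hs i) ht hw) hα
  linarith [mmObjective_sub_mmObjective d α β s t w]

end

theorem mm_update_descent_general {m p : ℕ} (d : Fin m → ℝ)
    (α β : ℝ) (hα : 0 < α) (hβ : 0 < β)
    (s : Fin p → Fin m → ℝ) (hs01 : ∀ i j, s i j = 0 ∨ s i j = 1)
    (hcol : ∀ j, ∃ i, s i j = 1)
    (w : Fin m → ℝ) (hw : ∀ j, 0 < w j) :
    (∀ j, 0 < (-2 * d j + Real.sqrt (4 * (d j) ^ 2
        + 8 * β * (α * ∑ i, s i j * w j / ∑ l, s i l * w l))) / (4 * β)) ∧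
    (2 * (∑ j, ((-2 * d j + Real.sqrt (4 * (d j) ^ 2
            + 8 * β * (α * ∑ i, s i j * w j / ∑ l, s i l * w l))) / (4 * β)) * d j)
        - α * ∑ i, Real.log (∑ j, s i j *
            ((-2 * d j + Real.sqrt (4 * (d j) ^ 2
              + 8 * β * (α * ∑ i', s i' j * w j / ∑ l, s i' l * w l))) / (4 * β)))
        + β * ∑ j, ((-2 * d j + Real.sqrt (4 * (d j) ^ 2
            + 8 * β * (α * ∑ i, s i j * w j / ∑ l, s i l * w l))) / (4 * β)) ^ 2
      ≤ 2 * (∑ j, w j * d j) - α * ∑ i, Real.log (∑ j, s i j * w j)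
        + β * ∑ j, (w j) ^ 2) := by
  have hs : ∀ i j, 0 ≤ s i j := fun i j => by rcases hs01 i j with h | h <;> simp [h]
  have hc : ∀ j, 0 < mmCoeff α s w j := fun j =>
    mmCoeff_pos hα hs hw (by obtain ⟨i, hi⟩ := hcol j; exact ⟨i, hi ▸ one_pos⟩)
  have ht : ∀ j, 0 < mmUpdate (d j) β (mmCoeff α s w j) := fun j => mmUpdate_pos hβ (hc j)
  exact ⟨ht, mmObjective_le_of_quadratic hα.le hβ.le hs hw ht
    fun j => mmUpdate_quadratic hβ (hc j).le⟩

/-- Per-iteration descent guarantee of the MM algorithm: the closed-form update (19)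
keeps the weights strictly positive and does not increase the objective (6). -/
theorem mm_update_descent {m p : ℕ} (d : Fin m → ℝ) (hd : ∀ j, 0 ≤ d j)
    (α β : ℝ) (hα : 0 < α) (hβ : 0 < β)
    (s : Fin p → Fin m → ℝ) (hs01 : ∀ i j, s i j = 0 ∨ s i j = 1)
    (hcol : ∀ j, ∃ i, s i j = 1)
    (w : Fin m → ℝ) (hw : ∀ j, 0 < w j) :
    (∀ j, 0 < (-2 * d j + Real.sqrt (4 * (d j) ^ 2
        + 8 * β * (α * ∑ i, s i j * w j / ∑ l, s i l * w l))) / (4 * β)) ∧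
    (2 * (∑ j, ((-2 * d j + Real.sqrt (4 * (d j) ^ 2
            + 8 * β * (α * ∑ i, s i j * w j / ∑ l, s i l * w l))) / (4 * β)) * d j)
        - α * ∑ i, Real.log (∑ j, s i j *
            ((-2 * d j + Real.sqrt (4 * (d j) ^ 2
              + 8 * β * (α * ∑ i', s i' j * w j / ∑ l, s i' l * w l))) / (4 * β)))
        + β * ∑ j, ((-2 * d j + Real.sqrt (4 * (d j) ^ 2
            + 8 * β * (α * ∑ i, s i j * w j / ∑ l, s i l * w l))) / (4 * β)) ^ 2
      ≤ 2 * (∑ j, w j * d j) - α * ∑ i, Real.log (∑ j, s i j * w j)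
        + β * ∑ j, (w j) ^ 2) :=
  mm_update_descent_general d α β hα hβ s hs01 hcol w hw
end
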